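/- arXiv:1708.03747 — 2 statements merged into one kernel-verified Lean document; each statement's English description precedes it below -/
import Mathlib

section
/- For every n ≥ 1 there is a monoid homomorphism φ from the singular braid monoid SB_n to itself satisfying φ(σ_i) = σ_i, φ(σ̄_i) = σ̄_i, and φ(τ_i) = σ_i τ_i for all 1 ≤ i ≤ n−1; that is, the assignment of generators σ_i ↦ σ_i, σ̄_i ↦ σ̄_i, τ_i ↦ σ_i τ_i respects all of the defining relations (Br0), (Br1), (Br2), (BrF). -/
/-- Generators of the singular braid monoid `SB n`: for `i : Fin (n - 1)`,
`sig i` represents `σ_{i+1}`, `sigInv i` represents `σ̄_{i+1}`, and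
`tau i` represents `τ_{i+1}`. -/
inductive SBGen (n : ℕ) : Type
  | sig (i : Fin (n - 1))
  | sigInv (i : Fin (n - 1))
  | tau (i : Fin (n - 1))

namespace SBGen

/-- `σ_i` as a word in the free monoid. -/
def s {n : ℕ} (i : Fin (n - 1)) : FreeMonoid (SBGen n) := FreeMonoid.of (sig i)

/-- `σ̄_i` as a word in the free monoid. -/
def si {n : ℕ} (i : Fin (n - 1)) : FreeMonoid (SBGen n) := FreeMonoid.of (sigInv i)

/-- `τ_i` as a word in the free monoid. -/
def t {n : ℕ} (i : Fin (n - 1)) : FreeMonoid (SBGen n) := FreeMonoid.of (tau i)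

end SBGen

open SBGen in
/-- The defining relations (Br0), (Br1), (Br2), (BrF) of the singular braid monoid. -/
inductive SBRel (n : ℕ) : FreeMonoid (SBGen n) → FreeMonoid (SBGen n) → Prop
  | br0_left (i : Fin (n - 1)) : SBRel n (s i * si i) 1
  | br0_right (i : Fin (n - 1)) : SBRel n (si i * s i) 1
  | br1_ss (i j : Fin (n - 1)) (h : (i : ℕ) + 1 < (j : ℕ) ∨ (j : ℕ) + 1 < (i : ℕ)) :
      SBRel n (s i * s j) (s j * s i)
  | br1_st (i j : Fin (n - 1)) (h : (i : ℕ) + 1 < (j : ℕ) ∨ (j : ℕ) + 1 < (i : ℕ)) :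
      SBRel n (s i * t j) (t j * s i)
  | br1_tt (i j : Fin (n - 1)) (h : (i : ℕ) + 1 < (j : ℕ) ∨ (j : ℕ) + 1 < (i : ℕ)) :
      SBRel n (t i * t j) (t j * t i)
  | br2_ss (i j : Fin (n - 1)) (h : (i : ℕ) + 1 = (j : ℕ) ∨ (j : ℕ) + 1 = (i : ℕ)) :
      SBRel n (s i * s j * s i) (s j * s i * s j)
  | br2_st (i j : Fin (n - 1)) (h : (i : ℕ) + 1 = (j : ℕ) ∨ (j : ℕ) + 1 = (i : ℕ)) :
      SBRel n (s i * s j * t i) (t j * s i * s j)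
  | brF (i : Fin (n - 1)) : SBRel n (s i * t i) (t i * s i)

/-- The singular braid monoid on `n` strands, as a presented monoid. -/
abbrev SB (n : ℕ) := PresentedMonoid (SBRel n)

/-- The generator `σ_i` of `SB n`. -/
def σ {n : ℕ} (i : Fin (n - 1)) : SB n := PresentedMonoid.of (SBRel n) (SBGen.sig i)

/-- The generator `σ̄_i` (the formal inverse of `σ_i`) of `SB n`. -/
def σInv {n : ℕ} (i : Fin (n - 1)) : SB n := PresentedMonoid.of (SBRel n) (SBGen.sigInv i)

/-- The generator `τ_i` of `SB n`. -/
def τ {n : ℕ} (i : Fin (n - 1)) : SB n := PresentedMonoid.of (SBRel n) (SBGen.tau i)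

/-!
A monoid homomorphism out of `SB n` is the same as a choice of images of the generators satisfying
the defining relations. The images `σ_i`, `σ̄_i`, `σ_i τ_i` satisfy them because each relation
involving `τ` survives the twist `τ_i ↦ σ_i τ_i`: far commutation is preserved since `σ_i`
commutes with everything `τ_i` commutes with, (BrF) becomes `σ_i (σ_i τ_i) = (σ_i τ_i) σ_i`, and
the mixed braid relation follows by moving `σ_i` past `τ_i`, applying the braid relations, and
moving `σ_j` back past `τ_j`.
-/

namespace SB

variable {n : ℕ} {M : Type*} [Monoid M]

def Far (i j : Fin (n - 1)) : Prop := (i : ℕ) + 1 < (j : ℕ) ∨ (j : ℕ) + 1 < (i : ℕ)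

def Adjacent (i j : Fin (n - 1)) : Prop := (i : ℕ) + 1 = (j : ℕ) ∨ (j : ℕ) + 1 = (i : ℕ)

theorem Far.symm {i j : Fin (n - 1)} (h : Far i j) : Far j i := Or.symm h

structure SatisfiesRelations (s s' t : Fin (n - 1) → M) : Prop where
  mul_inv : ∀ i, s i * s' i = 1
  inv_mul : ∀ i, s' i * s i = 1
  commute_ss : ∀ i j, Far i j → Commute (s i) (s j)
  commute_st : ∀ i j, Far i j → Commute (s i) (t j)
  commute_tt : ∀ i j, Far i j → Commute (t i) (t j)
  braid_ss : ∀ i j, Adjacent i j → s i * s j * s i = s j * s i * s j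
  braid_st : ∀ i j, Adjacent i j → s i * s j * t i = t j * s i * s j
  commute_self : ∀ i, Commute (s i) (t i)

def genValue (s s' t : Fin (n - 1) → M) : SBGen n → M
  | .sig i => s i
  | .sigInv i => s' i
  | .tau i => t i

namespace SatisfiesRelations

variable {s s' t : Fin (n - 1) → M}

theorem lift_genValue_eq (h : SatisfiesRelations s s' t) {a b : FreeMonoid (SBGen n)}
    (hab : SBRel n a b) :
    FreeMonoid.lift (genValue s s' t) a = FreeMonoid.lift (genValue s s' t) b := by
  cases hab with
  | br0_left i => exact h.mul_inv i
  | br0_right i => exact h.inv_mul i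
  | br1_ss i j hij => exact h.commute_ss i j hij
  | br1_st i j hij => exact h.commute_st i j hij
  | br1_tt i j hij => exact h.commute_tt i j hij
  | br2_ss i j hij => exact h.braid_ss i j hij
  | br2_st i j hij => exact h.braid_st i j hij
  | brF i => exact h.commute_self i

def lift (h : SatisfiesRelations s s' t) : SB n →* M :=
  PresentedMonoid.lift (genValue s s' t) fun _ _ => h.lift_genValue_eq

theorem sigma_mul_tau (h : SatisfiesRelations s s' t) : SatisfiesRelations s s' (s * t) where
  mul_inv := h.mul_inv
  inv_mul := h.inv_mul
  commute_ss := h.commute_ss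
  commute_st i j hij := (h.commute_ss i j hij).mul_right (h.commute_st i j hij)
  commute_tt i j hij :=
    ((h.commute_ss i j hij).mul_right (h.commute_st i j hij)).mul_left
      ((h.commute_st j i hij.symm).symm.mul_right (h.commute_tt i j hij))
  braid_ss := h.braid_ss
  braid_st i j hij :=
    calc s i * s j * (s i * t i) = s i * s j * t i * s i := by
          rw [(h.commute_self i).eq]; simp only [mul_assoc]
      _ = t j * (s i * s j * s i) := by rw [h.braid_st i j hij]; simp only [mul_assoc]
      _ = t j * s j * (s i * s j) := by rw [h.braid_ss i j hij]; simp only [mul_assoc]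
      _ = s j * t j * s i * s j := by rw [← (h.commute_self j).eq]; simp only [mul_assoc]
  commute_self i := (Commute.refl (s i)).mul_right (h.commute_self i)

end SatisfiesRelations

theorem satisfiesRelations_generators : SatisfiesRelations (σ (n := n)) σInv τ where
  mul_inv i := PresentedMonoid.mk_eq_mk_of_rel (.br0_left i)
  inv_mul i := PresentedMonoid.mk_eq_mk_of_rel (.br0_right i)
  commute_ss i j hij := PresentedMonoid.mk_eq_mk_of_rel (.br1_ss i j hij)
  commute_st i j hij := PresentedMonoid.mk_eq_mk_of_rel (.br1_st i j hij)
  commute_tt i j hij := PresentedMonoid.mk_eq_mk_of_rel (.br1_tt i j hij)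
  braid_ss i j hij := PresentedMonoid.mk_eq_mk_of_rel (.br2_ss i j hij)
  braid_st i j hij := PresentedMonoid.mk_eq_mk_of_rel (.br2_st i j hij)
  commute_self i := PresentedMonoid.mk_eq_mk_of_rel (.brF i)

end SB

theorem SB.exists_endomorphism_tau_to_sigma_mul_tau_general (n : ℕ) :
    ∃ φ : SB n →* SB n,
      (∀ i : Fin (n - 1), φ (σ i) = σ i) ∧
      (∀ i : Fin (n - 1), φ (σInv i) = σInv i) ∧
      (∀ i : Fin (n - 1), φ (τ i) = σ i * τ i) :=
  ⟨satisfiesRelations_generators.sigma_mul_tau.lift, fun _ => rfl, fun _ => rfl, fun _ => rfl⟩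

/-- For every `n ≥ 1` there is a monoid homomorphism `φ : SB n →* SB n`
with `φ σ_i = σ_i`, `φ σ̄_i = σ̄_i` and `φ τ_i = σ_i * τ_i` for all generators. -/
theorem SB.exists_endomorphism_tau_to_sigma_mul_tau (n : ℕ) (hn : 1 ≤ n) :
    ∃ φ : SB n →* SB n,
      (∀ i : Fin (n - 1), φ (σ i) = σ i) ∧
      (∀ i : Fin (n - 1), φ (σInv i) = σInv i) ∧
      (∀ i : Fin (n - 1), φ (τ i) = σ i * τ i) :=
  SB.exists_endomorphism_tau_to_sigma_mul_tau_general n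
end

section
/- Let SB_n^ξ be the monoid presented by generators σ_1,…,σ_{n−1}, σ̄_1,…,σ̄_{n−1}, ξ_1,…,ξ_{n−1} subject to the relations obtained from (Br0), (Br1), (Br2), (BrF) by replacing every occurrence of τ_i by ξ_i. Then the assignment σ_i ↦ σ_i, σ̄_i ↦ σ̄_i, ξ_i ↦ σ_i τ_i extends to a monoid isomorphism SB_n^ξ ≅ SB_n. In other words, SB_n admits exactly the same monoid presentation with the elements ξ_i := σ_i τ_i used as generators in place of the τ_i. -/
/-- Generators of the monoid `SBxi n`: `sig i` is `σ_{i+1}`, `sigInv i` is `σ̄_{i+1}`, and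
`xi i` is `ξ_{i+1}`, for `i : Fin (n - 1)`. -/
inductive SBxiGen (n : ℕ) : Type
  | sig (i : Fin (n - 1))
  | sigInv (i : Fin (n - 1))
  | xi (i : Fin (n - 1))

namespace SBxiGen

/-- `σ_i` as a word in the free monoid. -/
def s {n : ℕ} (i : Fin (n - 1)) : FreeMonoid (SBxiGen n) := FreeMonoid.of (sig i)

/-- `σ̄_i` as a word in the free monoid. -/
def si {n : ℕ} (i : Fin (n - 1)) : FreeMonoid (SBxiGen n) := FreeMonoid.of (sigInv i)

/-- `ξ_i` as a word in the free monoid. -/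
def x {n : ℕ} (i : Fin (n - 1)) : FreeMonoid (SBxiGen n) := FreeMonoid.of (xi i)

end SBxiGen

open SBxiGen in
/-- The relations (Br0), (Br1), (Br2), (BrF) with every `τ_i` replaced by `ξ_i`. -/
inductive SBxiRel (n : ℕ) : FreeMonoid (SBxiGen n) → FreeMonoid (SBxiGen n) → Prop
  | br0_left (i : Fin (n - 1)) : SBxiRel n (s i * si i) 1
  | br0_right (i : Fin (n - 1)) : SBxiRel n (si i * s i) 1
  | br1_ss (i j : Fin (n - 1)) (h : (i : ℕ) + 1 < (j : ℕ) ∨ (j : ℕ) + 1 < (i : ℕ)) :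
      SBxiRel n (s i * s j) (s j * s i)
  | br1_sx (i j : Fin (n - 1)) (h : (i : ℕ) + 1 < (j : ℕ) ∨ (j : ℕ) + 1 < (i : ℕ)) :
      SBxiRel n (s i * x j) (x j * s i)
  | br1_xx (i j : Fin (n - 1)) (h : (i : ℕ) + 1 < (j : ℕ) ∨ (j : ℕ) + 1 < (i : ℕ)) :
      SBxiRel n (x i * x j) (x j * x i)
  | br2_ss (i j : Fin (n - 1)) (h : (i : ℕ) + 1 = (j : ℕ) ∨ (j : ℕ) + 1 = (i : ℕ)) :
      SBxiRel n (s i * s j * s i) (s j * s i * s j)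
  | br2_sx (i j : Fin (n - 1)) (h : (i : ℕ) + 1 = (j : ℕ) ∨ (j : ℕ) + 1 = (i : ℕ)) :
      SBxiRel n (s i * s j * x i) (x j * s i * s j)
  | brF (i : Fin (n - 1)) : SBxiRel n (s i * x i) (x i * s i)

/-- The monoid `SB_n^ξ`, presented exactly as `SB n` but with `ξ_i` in place of `τ_i`. -/
abbrev SBxi (n : ℕ) := PresentedMonoid (SBxiRel n)

/-- The generator `σ_i` of `SBxi n`. -/
def ξσ {n : ℕ} (i : Fin (n - 1)) : SBxi n := PresentedMonoid.of (SBxiRel n) (SBxiGen.sig i)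

/-- The generator `σ̄_i` of `SBxi n`. -/
def ξσInv {n : ℕ} (i : Fin (n - 1)) : SBxi n := PresentedMonoid.of (SBxiRel n) (SBxiGen.sigInv i)

/-- The generator `ξ_i` of `SBxi n`. -/
def ξ {n : ℕ} (i : Fin (n - 1)) : SBxi n := PresentedMonoid.of (SBxiRel n) (SBxiGen.xi i)


/-!
Since `σ_i` is a unit, `t_i ↦ σ_i t_i` is invertible, and the relations (Br0)–(BrF) are
invariant under it: a family `(σ, t)` in any monoid satisfies them if and only if `(σ, σ t)`
does. The far commutations survive because `σ̄_i` commutes with whatever `σ_i` commutes with,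
and the mixed braid relation because `σ_i σ_j σ̄_i = σ̄_j σ_i σ_j` for adjacent `i, j`. Hence
`ξ_i ↦ σ_i τ_i` and `τ_i ↦ σ̄_i ξ_i` define mutually inverse homomorphisms.
-/

section

variable {M : Type*} [Monoid M] {n : ℕ}

/-- Relations (Br1), (Br2), (BrF) for `σ_i := s i` and `τ_i := t i`; (Br0) is built in by
taking `σ̄_i := (s i)⁻¹`. -/
structure IsSingularBraidFamily (s : Fin (n - 1) → Mˣ) (t : Fin (n - 1) → M) : Prop where
  commute_ss : ∀ i j : Fin (n - 1), (i : ℕ) + 1 < j ∨ (j : ℕ) + 1 < i →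
    Commute (s i : M) (s j)
  commute_st : ∀ i j : Fin (n - 1), (i : ℕ) + 1 < j ∨ (j : ℕ) + 1 < i →
    Commute (s i : M) (t j)
  commute_tt : ∀ i j : Fin (n - 1), (i : ℕ) + 1 < j ∨ (j : ℕ) + 1 < i →
    Commute (t i) (t j)
  braid_ss : ∀ i j : Fin (n - 1), (i : ℕ) + 1 = j ∨ (j : ℕ) + 1 = i →
    s i * s j * s i = s j * s i * s j
  braid_st : ∀ i j : Fin (n - 1), (i : ℕ) + 1 = j ∨ (j : ℕ) + 1 = i →
    (s i * s j * t i : M) = t j * s i * s j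
  commute_self : ∀ i : Fin (n - 1), Commute (s i : M) (t i)

def SBGen.eval (s : Fin (n - 1) → Mˣ) (t : Fin (n - 1) → M) : SBGen n → M
  | .sig i => s i
  | .sigInv i => ↑(s i)⁻¹
  | .tau i => t i

def SBxiGen.eval (s : Fin (n - 1) → Mˣ) (x : Fin (n - 1) → M) : SBxiGen n → M
  | .sig i => s i
  | .sigInv i => ↑(s i)⁻¹
  | .xi i => x i

namespace IsSingularBraidFamily

variable {s : Fin (n - 1) → Mˣ} {t : Fin (n - 1) → M}

theorem mul_left (h : IsSingularBraidFamily s t) :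
    IsSingularBraidFamily s (fun i => s i * t i) where
  commute_ss := h.commute_ss
  commute_st i j hij := (h.commute_ss i j hij).mul_right (h.commute_st i j hij)
  commute_tt i j hij :=
    ((h.commute_ss i j hij).mul_right (h.commute_st i j hij)).mul_left
      ((h.commute_st j i hij.symm).symm.mul_right (h.commute_tt i j hij))
  braid_ss := h.braid_ss
  braid_st i j hij := by
    have hss : (s i * s j * s i : M) = s j * s i * s j := by
      exact_mod_cast h.braid_ss i j hij
    calc (s i * s j * (s i * t i) : M) = s i * s j * t i * s i := by
          rw [(h.commute_self i).eq]; simp only [mul_assoc]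
      _ = t j * (s i * s j * s i) := by rw [h.braid_st i j hij]; simp only [mul_assoc]
      _ = s j * t j * s i * s j := by
          rw [hss, (h.commute_self j).eq]; simp only [mul_assoc]
  commute_self i := (Commute.refl _).mul_right (h.commute_self i)

theorem inv_mul_left (h : IsSingularBraidFamily s t) :
    IsSingularBraidFamily s (fun i => ↑(s i)⁻¹ * t i) where
  commute_ss := h.commute_ss
  commute_st i j hij := (h.commute_ss i j hij).units_inv_right.mul_right (h.commute_st i j hij)
  commute_tt i j hij :=
    ((h.commute_ss i j hij).units_inv_right.mul_right
        (h.commute_st i j hij)).units_inv_left.mul_left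
      ((h.commute_st j i hij.symm).symm.units_inv_right.mul_right (h.commute_tt i j hij))
  braid_ss := h.braid_ss
  braid_st i j hij := by
    have hconj : s i * s j * (s i)⁻¹ = (s j)⁻¹ * s i * s j :=
      calc s i * s j * (s i)⁻¹ = (s j)⁻¹ * (s j * s i * s j) * (s i)⁻¹ := by group
        _ = (s j)⁻¹ * (s i * s j * s i) * (s i)⁻¹ := by rw [h.braid_ss j i hij.symm]
        _ = (s j)⁻¹ * s i * s j := by group
    calc (s i * s j * (↑(s i)⁻¹ * t i) : M) = ↑(s i * s j * (s i)⁻¹) * t i := by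
          push_cast; simp only [mul_assoc]
      _ = ↑(s j)⁻¹ * (s i * s j * t i) := by rw [hconj]; push_cast; simp only [mul_assoc]
      _ = ↑(s j)⁻¹ * t j * s i * s j := by rw [h.braid_st i j hij]; simp only [mul_assoc]
  commute_self i := (Commute.refl _).units_inv_right.mul_right (h.commute_self i)

theorem lift_eval_eq_of_SBRel (h : IsSingularBraidFamily s t) {a b : FreeMonoid (SBGen n)}
    (hab : SBRel n a b) :
    FreeMonoid.lift (SBGen.eval s t) a = FreeMonoid.lift (SBGen.eval s t) b := by
  cases hab with
  | br0_left i => simp [SBGen.s, SBGen.si, SBGen.eval]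
  | br0_right i => simp [SBGen.s, SBGen.si, SBGen.eval]
  | br1_ss i j hij => simpa [SBGen.s, SBGen.eval] using (h.commute_ss i j hij).eq
  | br1_st i j hij => simpa [SBGen.s, SBGen.t, SBGen.eval] using (h.commute_st i j hij).eq
  | br1_tt i j hij => simpa [SBGen.t, SBGen.eval] using (h.commute_tt i j hij).eq
  | br2_ss i j hij => simpa [SBGen.s, SBGen.eval] using congrArg Units.val (h.braid_ss i j hij)
  | br2_st i j hij => simpa [SBGen.s, SBGen.t, SBGen.eval] using h.braid_st i j hij
  | brF i => simpa [SBGen.s, SBGen.t, SBGen.eval] using (h.commute_self i).eq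

theorem lift_eval_eq_of_SBxiRel (h : IsSingularBraidFamily s t) {a b : FreeMonoid (SBxiGen n)}
    (hab : SBxiRel n a b) :
    FreeMonoid.lift (SBxiGen.eval s t) a = FreeMonoid.lift (SBxiGen.eval s t) b := by
  cases hab with
  | br0_left i => simp [SBxiGen.s, SBxiGen.si, SBxiGen.eval]
  | br0_right i => simp [SBxiGen.s, SBxiGen.si, SBxiGen.eval]
  | br1_ss i j hij => simpa [SBxiGen.s, SBxiGen.eval] using (h.commute_ss i j hij).eq
  | br1_sx i j hij => simpa [SBxiGen.s, SBxiGen.x, SBxiGen.eval] using (h.commute_st i j hij).eq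
  | br1_xx i j hij => simpa [SBxiGen.x, SBxiGen.eval] using (h.commute_tt i j hij).eq
  | br2_ss i j hij =>
    simpa [SBxiGen.s, SBxiGen.eval] using congrArg Units.val (h.braid_ss i j hij)
  | br2_sx i j hij => simpa [SBxiGen.s, SBxiGen.x, SBxiGen.eval] using h.braid_st i j hij
  | brF i => simpa [SBxiGen.s, SBxiGen.x, SBxiGen.eval] using (h.commute_self i).eq

def liftSB (h : IsSingularBraidFamily s t) : SB n →* M :=
  PresentedMonoid.lift (SBGen.eval s t) fun _ _ => h.lift_eval_eq_of_SBRel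

def liftSBxi (h : IsSingularBraidFamily s t) : SBxi n →* M :=
  PresentedMonoid.lift (SBxiGen.eval s t) fun _ _ => h.lift_eval_eq_of_SBxiRel

end IsSingularBraidFamily

def σUnit (i : Fin (n - 1)) : (SB n)ˣ :=
  ⟨σ i, σInv i, PresentedMonoid.mk_eq_mk_of_rel (.br0_left i),
    PresentedMonoid.mk_eq_mk_of_rel (.br0_right i)⟩

def ξσUnit (i : Fin (n - 1)) : (SBxi n)ˣ :=
  ⟨ξσ i, ξσInv i, PresentedMonoid.mk_eq_mk_of_rel (.br0_left i),
    PresentedMonoid.mk_eq_mk_of_rel (.br0_right i)⟩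

theorem isSingularBraidFamily_σUnit_τ : IsSingularBraidFamily (σUnit (n := n)) τ where
  commute_ss i j hij := PresentedMonoid.mk_eq_mk_of_rel (.br1_ss i j hij)
  commute_st i j hij := PresentedMonoid.mk_eq_mk_of_rel (.br1_st i j hij)
  commute_tt i j hij := PresentedMonoid.mk_eq_mk_of_rel (.br1_tt i j hij)
  braid_ss i j hij := Units.ext (PresentedMonoid.mk_eq_mk_of_rel (.br2_ss i j hij))
  braid_st i j hij := PresentedMonoid.mk_eq_mk_of_rel (.br2_st i j hij)
  commute_self i := PresentedMonoid.mk_eq_mk_of_rel (.brF i)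

theorem isSingularBraidFamily_ξσUnit_ξ : IsSingularBraidFamily (ξσUnit (n := n)) ξ where
  commute_ss i j hij := PresentedMonoid.mk_eq_mk_of_rel (.br1_ss i j hij)
  commute_st i j hij := PresentedMonoid.mk_eq_mk_of_rel (.br1_sx i j hij)
  commute_tt i j hij := PresentedMonoid.mk_eq_mk_of_rel (.br1_xx i j hij)
  braid_ss i j hij := Units.ext (PresentedMonoid.mk_eq_mk_of_rel (.br2_ss i j hij))
  braid_st i j hij := PresentedMonoid.mk_eq_mk_of_rel (.br2_sx i j hij)
  commute_self i := PresentedMonoid.mk_eq_mk_of_rel (.brF i)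

end

theorem SBxi.exists_mulEquiv_SB_general (n : ℕ) :
    ∃ e : SBxi n ≃* SB n,
      (∀ i : Fin (n - 1), e (ξσ i) = σ i) ∧
      (∀ i : Fin (n - 1), e (ξσInv i) = σInv i) ∧
      (∀ i : Fin (n - 1), e (ξ i) = σ i * τ i) := by
  let F : SBxi n →* SB n := isSingularBraidFamily_σUnit_τ.mul_left.liftSBxi
  let G : SB n →* SBxi n := isSingularBraidFamily_ξσUnit_ξ.inv_mul_left.liftSB
  have hGF : G.comp F = .id _ := PresentedMonoid.ext _ fun
    | .sig _ | .sigInv _ => rfl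
    | .xi i => Units.mul_inv_cancel_left (ξσUnit i) (ξ i)
  have hFG : F.comp G = .id _ := PresentedMonoid.ext _ fun
    | .sig _ | .sigInv _ => rfl
    | .tau i => Units.inv_mul_cancel_left (σUnit i) (τ i)
  exact ⟨F.toMulEquiv G hGF hFG, fun _ => rfl, fun _ => rfl, fun _ => rfl⟩

/-- The assignment `σ_i ↦ σ_i`, `σ̄_i ↦ σ̄_i`, `ξ_i ↦ σ_i τ_i` extends to a
monoid isomorphism `SB_n^ξ ≅ SB_n`; that is, `SB n` admits the same presentation with the
elements `ξ_i := σ_i τ_i` used as generators in place of the `τ_i`. -/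
theorem SBxi.exists_mulEquiv_SB (n : ℕ) (hn : 1 ≤ n) :
    ∃ e : SBxi n ≃* SB n,
      (∀ i : Fin (n - 1), e (ξσ i) = σ i) ∧
      (∀ i : Fin (n - 1), e (ξσInv i) = σInv i) ∧
      (∀ i : Fin (n - 1), e (ξ i) = σ i * τ i) :=
  SBxi.exists_mulEquiv_SB_general n
end
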